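/- Let p be a prime and for σ ∈ ℚ_p let u_σ ∈ SL(2,ℚ_p) be the matrix with rows (1,σ),(0,1). Then for every g ∈ SL(2,ℚ_p) with entries g_{ij} there exists j₀ such that for all integers j ≥ j₀, μ_p{σ ∈ ℚ_p : ‖u_σ g‖_p ≤ p^j} = p^j / max(|g₂₁|_p, |g₂₂|_p). In particular the ratio μ_p{σ : ‖u_σ g‖_p ≤ p^j} / μ_p{σ : ‖u_σ‖_p ≤ p^j} is eventually equal to 1/max(|g₂₁|_p, |g₂₂|_p). -/

import Mathlib

/-!
The Haar modulus of `ℚ_[p]` is the `p`-adic norm: `ℤ_[p]` is the disjoint union of the `p`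
cosets `i + pℤ_[p]`, so multiplication by `p` scales Haar measure by `p⁻¹`, and every `x ≠ 0` has
the norm of a power of `p`. Hence `{σ | ‖c + σ d‖ ≤ p ^ j}`, an affine image of a ball, has
measure `p ^ j / ‖d‖`.

The entries of the top row of `u_σ g` are `a + σ b` and `c + σ d`, where `(b, d)` is the bottom row
of `g`. Say `‖b‖ ≤ ‖d‖`. By the ultrametric inequality applied to
`(a + σ b) d = det g + b (c + σ d)`, for large `j` the bound on `c + σ d` implies the one on
`a + σ b`. The ratio statement is the case `g = 1` combined with the general one.
-/

open MeasureTheory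

noncomputable def matSupNorm {n : ℕ} {K : Type*} [NormedField K]
    (g : Matrix (Fin n) (Fin n) K) : ℝ :=
  ((Finset.univ.sup fun i => Finset.univ.sup fun j => ‖g i j‖₊ : NNReal) : ℝ)

noncomputable instance (p : ℕ) [Fact p.Prime] : MeasurableSpace ℚ_[p] := borel _

/-- The upper-triangular unipotent matrix u_σ over ℚ_p. -/
noncomputable def uMatP (p : ℕ) [Fact p.Prime] (σ : ℚ_[p]) : Matrix (Fin 2) (Fin 2) ℚ_[p] :=
  !![1, σ; 0, 1]

open Metric Filter
open scoped Pointwise ENNReal NNReal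

lemma matSupNorm_le_iff {n : ℕ} {K : Type*} [NormedField K] {g : Matrix (Fin n) (Fin n) K}
    {r : ℝ} (hr : 0 ≤ r) : matSupNorm g ≤ r ↔ ∀ i j, ‖g i j‖ ≤ r := by
  rw [matSupNorm, ← Real.coe_toNNReal r hr, NNReal.coe_le_coe]
  simp only [Finset.sup_le_iff, Finset.mem_univ, forall_const, ← NNReal.coe_le_coe,
    Real.coe_toNNReal r hr, coe_nnnorm]

lemma eventually_le_zpow {K : Type*} [Field K] [LinearOrder K] [IsStrictOrderedRing K]
    [Archimedean K] {a : K} (ha : 1 < a) (C : K) : ∀ᶠ j : ℤ in atTop, C ≤ a ^ j := by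
  obtain ⟨N, hN⟩ := pow_unbounded_of_one_lt C ha
  refine eventually_atTop.2 ⟨N, fun j hj ↦ hN.le.trans ?_⟩
  rw [← zpow_natCast]
  exact zpow_le_zpow_right₀ ha.le hj

lemma norm_add_mul_le_of_norm_add_mul_le {K : Type*} [NormedField K] [IsUltrametricDist K]
    {a b c d σ : K} {r : ℝ} (hdet : ‖a * d - c * b‖ = 1) (hbd : ‖b‖ ≤ ‖d‖)
    (hr : 1 ≤ r * ‖d‖) (h : ‖c + σ * d‖ ≤ r) : ‖a + σ * b‖ ≤ r := by
  have hd : 0 < ‖d‖ := by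
    by_contra! h0
    nlinarith [norm_nonneg d, norm_nonneg (c + σ * d)]
  refine le_of_mul_le_mul_right ?_ hd
  calc ‖a + σ * b‖ * ‖d‖ = ‖(a * d - c * b) + b * (c + σ * d)‖ := by
        rw [← norm_mul]; ring_nf
    _ ≤ max ‖a * d - c * b‖ ‖b * (c + σ * d)‖ := IsUltrametricDist.norm_add_le_max _ _
    _ ≤ r * ‖d‖ := by
      rw [hdet, norm_mul, mul_comm r]
      exact max_le (mul_comm r _ ▸ hr) (mul_le_mul hbd h (norm_nonneg _) (norm_nonneg _))

namespace Padic

variable {p : ℕ} [Fact p.Prime]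

instance : BorelSpace ℚ_[p] := ⟨rfl⟩

lemma closedBall_one_eq_biUnion :
    closedBall (0 : ℚ_[p]) 1 = ⋃ i ∈ Finset.range p, closedBall (i : ℚ_[p]) (p : ℝ)⁻¹ := by
  ext x
  simp only [mem_closedBall, sub_zero, Set.mem_iUnion, Finset.mem_range, exists_prop, dist_eq_norm]
  constructor
  · intro hx
    obtain ⟨z, rfl⟩ : ∃ z : ℤ_[p], (z : ℚ_[p]) = x := ⟨⟨x, hx⟩, rfl⟩
    obtain ⟨i, hi, hmem⟩ := PadicInt.exists_mem_range z
    rw [IsLocalRing.mem_maximalIdeal, PadicInt.mem_nonunits, ← zpow_zero (p : ℝ),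
      PadicInt.norm_lt_pow_iff_norm_le_pow_sub_one] at hmem
    exact ⟨i, hi, by simpa [PadicInt.norm_def] using hmem⟩
  · rintro ⟨i, -, hi⟩
    calc ‖x‖ = ‖(x - i) + i‖ := by rw [sub_add_cancel]
      _ ≤ max ‖x - i‖ ‖(i : ℚ_[p])‖ := IsUltrametricDist.norm_add_le_max _ _
      _ ≤ 1 := max_le (hi.trans (inv_le_one_of_one_le₀ (mod_cast (Fact.out : p.Prime).one_le)))
                (mod_cast norm_int_le_one (i : ℤ))

lemma pairwiseDisjoint_closedBall_natCast :
    (Finset.range p : Set ℕ).PairwiseDisjoint fun i ↦ closedBall (i : ℚ_[p]) (p : ℝ)⁻¹ := by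
  intro i hi j hj hij
  refine (IsUltrametricDist.closedBall_eq_or_disjoint (i : ℚ_[p]) j _).resolve_left fun h ↦ ?_
  have hmem : (j : ℚ_[p]) ∈ closedBall (i : ℚ_[p]) (p : ℝ)⁻¹ :=
    h ▸ mem_closedBall_self (by positivity)
  rw [mem_closedBall, dist_eq_norm] at hmem
  have hdvd : (p : ℤ) ∣ j - i := by
    rw [← norm_intCast_lt_one_iff (p := p)]
    push_cast
    exact hmem.trans_lt (inv_lt_one_of_one_lt₀ (mod_cast (Fact.out : p.Prime).one_lt))
  simp only [Finset.coe_range, Set.mem_Iio] at hi hj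
  have := Int.eq_zero_of_abs_lt_dvd hdvd (by rw [abs_lt]; omega)
  omega

variable (μ : Measure ℚ_[p]) [μ.IsAddHaarMeasure]

lemma measure_closedBall_one_eq_mul :
    μ (closedBall 0 1) = p * μ (closedBall 0 (p : ℝ)⁻¹) := by
  rw [closedBall_one_eq_biUnion, measure_biUnion_finset pairwiseDisjoint_closedBall_natCast
    fun _ _ ↦ measurableSet_closedBall]
  simp [Measure.addHaar_closedBall_center]

lemma smul_closedBall_zero_one (x : ℚ_[p]) : x • closedBall (0 : ℚ_[p]) 1 = closedBall 0 ‖x‖ := by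
  rw [_root_.smul_closedBall _ _ zero_le_one, smul_zero, mul_one]

lemma measure_closedBall_one_ne_zero : μ (closedBall 0 1) ≠ 0 :=
  (IsUltrametricDist.isOpen_closedBall 0 one_ne_zero).measure_ne_zero μ
    (nonempty_closedBall.2 zero_le_one)

lemma measure_closedBall_one_ne_top : μ (closedBall 0 1) ≠ ∞ :=
  (isCompact_closedBall 0 1).measure_ne_top

lemma distribHaarChar_mul_measure_closedBall_one (x : ℚ_[p]ˣ) :
    distribHaarChar ℚ_[p] x * μ (closedBall 0 1) = μ (closedBall 0 ‖(x : ℚ_[p])‖) := by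
  rw [distribHaarChar_mul, ← smul_closedBall_zero_one]
  rfl

lemma distribHaarChar_mk0_p (hp : (p : ℚ_[p]) ≠ 0) :
    distribHaarChar ℚ_[p] (Units.mk0 _ hp) = (p : ℝ≥0)⁻¹ := by
  refine distribHaarChar_eq_of_measure_smul_eq_mul (measure_closedBall_one_ne_zero Measure.addHaar)
    (measure_closedBall_one_ne_top Measure.addHaar) ?_
  rw [show (Units.mk0 _ hp • closedBall (0 : ℚ_[p]) 1) = closedBall 0 (p : ℝ)⁻¹ by
    rw [← norm_p]; exact smul_closedBall_zero_one _]
  rw [measure_closedBall_one_eq_mul, ← mul_assoc]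
  have hp' : (p : ℝ≥0) ≠ 0 := by exact_mod_cast hp
  rw [ENNReal.coe_inv hp', ENNReal.coe_natCast,
    ENNReal.inv_mul_cancel (by exact_mod_cast hp) (ENNReal.natCast_ne_top p), one_mul]

lemma distribHaarChar_eq_nnnorm (x : ℚ_[p]ˣ) : distribHaarChar ℚ_[p] x = ‖(x : ℚ_[p])‖₊ := by
  have hp : (p : ℚ_[p]) ≠ 0 := by simp [(Fact.out : p.Prime).ne_zero]
  set v := (x : ℚ_[p]).valuation
  have hnorm : ‖((Units.mk0 _ hp ^ v : ℚ_[p]ˣ) : ℚ_[p])‖ = ‖(x : ℚ_[p])‖ := by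
    rw [Units.val_zpow_eq_zpow_val, Units.val_mk0, norm_p_zpow,
      norm_eq_zpow_neg_valuation x.ne_zero]
  have h := distribHaarChar_mul_measure_closedBall_one Measure.addHaar x
  rw [← hnorm, ← distribHaarChar_mul_measure_closedBall_one] at h
  rw [ENNReal.coe_injective ((ENNReal.mul_left_inj (measure_closedBall_one_ne_zero _)
    (measure_closedBall_one_ne_top _)).1 h), map_zpow, distribHaarChar_mk0_p]
  ext
  push_cast
  rw [norm_eq_zpow_neg_valuation x.ne_zero, zpow_neg, inv_zpow]

lemma measure_closedBall_norm {x : ℚ_[p]} (hx : x ≠ 0) :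
    μ (closedBall 0 ‖x‖) = ‖x‖ₑ * μ (closedBall 0 1) := by
  rw [← Units.val_mk0 hx, ← distribHaarChar_mul_measure_closedBall_one, distribHaarChar_eq_nnnorm]
  rfl

lemma measure_closedBall_zpow (hμ : μ (closedBall 0 1) = 1) (j : ℤ) :
    μ (closedBall 0 ((p : ℝ) ^ j)) = ENNReal.ofReal ((p : ℝ) ^ j) := by
  have hp : (p : ℚ_[p]) ≠ 0 := by simp [(Fact.out : p.Prime).ne_zero]
  rw [← neg_neg j, ← norm_p_zpow, measure_closedBall_norm μ (zpow_ne_zero _ hp), hμ, mul_one,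
    ofReal_norm]

lemma measure_setOf_norm_add_mul_le (c : ℚ_[p]) {d : ℚ_[p]} (hd : d ≠ 0) (r : ℝ) :
    μ {σ | ‖c + σ * d‖ ≤ r} = ‖d‖ₑ⁻¹ * μ (closedBall 0 r) := by
  have hset : {σ | ‖c + σ * d‖ ≤ r} = (Units.mk0 d hd)⁻¹ • (-c +ᵥ closedBall (0 : ℚ_[p]) r) := by
    ext σ
    rw [Set.mem_inv_smul_set_iff, Set.mem_vadd_set_iff_neg_vadd_mem, Units.smul_def,
      Units.val_mk0, mem_closedBall_zero_iff, Set.mem_ofPred_eq, neg_neg, vadd_eq_add,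
      smul_eq_mul, mul_comm]
  rw [hset, ← distribHaarChar_mul, measure_vadd, distribHaarChar_eq_nnnorm,
    Units.val_inv_eq_inv_val, Units.val_mk0, nnnorm_inv, ENNReal.coe_inv (nnnorm_ne_zero_iff.2 hd)]
  rfl

lemma measure_setOf_norm_add_mul_le_and (hμ : μ (closedBall 0 1) = 1) {a b c d : ℚ_[p]}
    (hdet : ‖a * d - c * b‖ = 1) {j : ℤ} (hj : 1 ≤ (p : ℝ) ^ j * max ‖b‖ ‖d‖) :
    μ {σ | ‖a + σ * b‖ ≤ (p : ℝ) ^ j ∧ ‖c + σ * d‖ ≤ (p : ℝ) ^ j} =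
      ENNReal.ofReal ((p : ℝ) ^ j / max ‖b‖ ‖d‖) := by
  wlog hbd : ‖b‖ ≤ ‖d‖ generalizing a b c d
  · simpa only [and_comm, max_comm] using
      this (a := c) (c := a) (by rwa [norm_sub_rev]) (by rwa [max_comm]) (le_of_not_ge hbd)
  rw [max_eq_right hbd] at hj ⊢
  have hd : 0 < ‖d‖ := by
    by_contra! h0
    nlinarith [norm_nonneg d, zpow_pos (Nat.cast_pos.2 (Fact.out : p.Prime).pos : (0 : ℝ) < p) j]
  have hset : {σ | ‖a + σ * b‖ ≤ (p : ℝ) ^ j ∧ ‖c + σ * d‖ ≤ (p : ℝ) ^ j} =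
      {σ | ‖c + σ * d‖ ≤ (p : ℝ) ^ j} :=
    Set.ext fun σ ↦ and_iff_right_of_imp (norm_add_mul_le_of_norm_add_mul_le hdet hbd hj)
  rw [hset, measure_setOf_norm_add_mul_le μ c (norm_pos_iff.1 hd), measure_closedBall_zpow μ hμ,
    div_eq_inv_mul, ENNReal.ofReal_mul (inv_nonneg.2 hd.le), ENNReal.ofReal_inv_of_pos hd,
    ofReal_norm]

end Padic

lemma uMatP_mul (p : ℕ) [Fact p.Prime] (σ : ℚ_[p]) (G : Matrix (Fin 2) (Fin 2) ℚ_[p]) :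
    uMatP p σ * G = !![G 0 0 + σ * G 1 0, G 0 1 + σ * G 1 1; G 1 0, G 1 1] := by
  rw [uMatP, G.eta_fin_two, Matrix.mul_fin_two]
  simp

lemma matSupNorm_uMatP_mul_le_iff {p : ℕ} [Fact p.Prime] {σ : ℚ_[p]}
    {G : Matrix (Fin 2) (Fin 2) ℚ_[p]} {r : ℝ} (hr : 0 ≤ r) :
    matSupNorm (uMatP p σ * G) ≤ r ↔
      (‖G 0 0 + σ * G 1 0‖ ≤ r ∧ ‖G 0 1 + σ * G 1 1‖ ≤ r) ∧ ‖G 1 0‖ ≤ r ∧ ‖G 1 1‖ ≤ r := by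
  rw [uMatP_mul, matSupNorm_le_iff hr]
  simp [Fin.forall_fin_two, and_assoc]

lemma eventually_measure_matSupNorm_uMatP_mul_le {p : ℕ} [Fact p.Prime] (μ : Measure ℚ_[p])
    [μ.IsAddHaarMeasure] (hμ : μ (closedBall 0 1) = 1)
    (g : Matrix.SpecialLinearGroup (Fin 2) ℚ_[p]) :
    ∀ᶠ j : ℤ in atTop,
      μ {σ | matSupNorm (uMatP p σ * (g : Matrix (Fin 2) (Fin 2) ℚ_[p])) ≤ (p : ℝ) ^ j} =
        ENNReal.ofReal ((p : ℝ) ^ j / max ‖(g : Matrix (Fin 2) (Fin 2) ℚ_[p]) 1 0‖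
          ‖(g : Matrix (Fin 2) (Fin 2) ℚ_[p]) 1 1‖) := by
  set G := (g : Matrix (Fin 2) (Fin 2) ℚ_[p])
  set m := max ‖G 1 0‖ ‖G 1 1‖
  have hdet : ‖G 0 0 * G 1 1 - G 0 1 * G 1 0‖ = 1 := by
    rw [← Matrix.det_fin_two, g.det_coe, norm_one]
  have hm : 0 < m := by
    by_contra! h0
    have h10 : G 1 0 = 0 := norm_le_zero_iff.1 ((le_max_left _ _).trans h0)
    have h11 : G 1 1 = 0 := norm_le_zero_iff.1 ((le_max_right _ _).trans h0)
    simp [h10, h11] at hdet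
  filter_upwards [eventually_le_zpow (Nat.one_lt_cast.2 (Fact.out : p.Prime).one_lt) (max m m⁻¹)]
    with j hj
  have hmj : m ≤ (p : ℝ) ^ j := (le_max_left _ _).trans hj
  have hjm : 1 ≤ (p : ℝ) ^ j * m :=
    (inv_le_iff_one_le_mul₀ hm).1 ((le_max_right _ _).trans hj)
  rw [← Padic.measure_setOf_norm_add_mul_le_and μ hμ hdet hjm]
  congr 1
  ext σ
  rw [Set.mem_ofPred_eq, Set.mem_ofPred_eq, matSupNorm_uMatP_mul_le_iff (hm.le.trans hmj),
    and_iff_left ⟨(le_max_left _ _).trans hmj, (le_max_right _ _).trans hmj⟩]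

theorem stmt10 (p : ℕ) [Fact p.Prime] (μp : Measure ℚ_[p]) [μp.IsAddHaarMeasure]
    (hμp : μp {x : ℚ_[p] | ‖x‖ ≤ 1} = 1)
    (g : Matrix.SpecialLinearGroup (Fin 2) ℚ_[p]) :
    (∃ j₀ : ℤ, ∀ j : ℤ, j₀ ≤ j →
      μp {σ : ℚ_[p] |
          matSupNorm (uMatP p σ * (g : Matrix (Fin 2) (Fin 2) ℚ_[p])) ≤ (p : ℝ) ^ j} =
        ENNReal.ofReal ((p : ℝ) ^ j /
          max ‖(g : Matrix (Fin 2) (Fin 2) ℚ_[p]) 1 0‖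
            ‖(g : Matrix (Fin 2) (Fin 2) ℚ_[p]) 1 1‖)) ∧
    (∃ j₀ : ℤ, ∀ j : ℤ, j₀ ≤ j →
      (μp {σ : ℚ_[p] |
          matSupNorm (uMatP p σ * (g : Matrix (Fin 2) (Fin 2) ℚ_[p])) ≤ (p : ℝ) ^ j}).toReal /
        (μp {σ : ℚ_[p] | matSupNorm (uMatP p σ) ≤ (p : ℝ) ^ j}).toReal =
      1 / max ‖(g : Matrix (Fin 2) (Fin 2) ℚ_[p]) 1 0‖
          ‖(g : Matrix (Fin 2) (Fin 2) ℚ_[p]) 1 1‖) := by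
  have hμ : μp (closedBall 0 1) = 1 := by simpa only [closedBall, dist_zero_right] using hμp
  have hg := eventually_measure_matSupNorm_uMatP_mul_le μp hμ g
  refine ⟨eventually_atTop.1 hg, ?_⟩
  obtain ⟨j₀, h⟩ := eventually_atTop.1 (hg.and (eventually_measure_matSupNorm_uMatP_mul_le μp hμ 1))
  refine ⟨j₀, fun j hj ↦ ?_⟩
  obtain ⟨hgj, h1j⟩ := h j hj
  simp only [Matrix.SpecialLinearGroup.coe_one, mul_one, Matrix.one_apply_ne one_ne_zero,
    Matrix.one_apply_eq, norm_zero, norm_one, max_eq_right zero_le_one, div_one] at h1j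
  rw [hgj, h1j, ENNReal.toReal_ofReal (by positivity), ENNReal.toReal_ofReal (by positivity),
    div_right_comm, div_self (zpow_ne_zero j (Nat.cast_ne_zero.2 (Fact.out : p.Prime).ne_zero))]
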